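/- arXiv:2505.06242 — 2 statements merged into one kernel-verified Lean document; each statement's English description precedes it below -/
import Mathlib

section
/- Let α, β ∈ (0,1] with α + β > 1, and let f, g : ℝ → ℝ be functions on a compact interval [a,b] (a < b) such that f is α-Hölder continuous on [a,b] (there is C_f ≥ 0 with |f(x) − f(y)| ≤ C_f |x − y|^α for all x, y ∈ [a,b]) and g is β-Hölder continuous on [a,b]. Then the Riemann–Stieltjes integral ∫_a^b f dg exists: there is a number I such that for every ε > 0 there exists δ > 0 so that for every partition a = x₀ ≤ … ≤ x_n = b of mesh less than δ and every choice of tags ξ_i ∈ [x_{i−1}, x_i], one has |∑_{i=1}^n f(ξ_i)(g(x_i) − g(x_{i−1})) − I| < ε. -/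
open Finset Set

namespace YoungAux

lemma steps_mono {M : Type*} [Preorder M] (x : ℕ → M) (n : ℕ)
    (h : ∀ i < n, x i ≤ x (i+1)) : ∀ i j, i ≤ j → j ≤ n → x i ≤ x j := by
  intro i j hij hjn
  induction j with
  | zero => interval_cases i; exact le_refl _
  | succ j ih =>
    rcases Nat.eq_or_lt_of_le hij with rfl | hlt
    · exact le_refl _
    · exact (ih (Nat.lt_succ_iff.mp hlt) (le_trans (Nat.le_succ j) hjn)).trans (h j (by omega))

noncomputable def Zet (θ : ℝ) : ℝ := ∑' k : ℕ, ((k:ℝ)+1) ^ (-θ)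

lemma summable_zet {θ : ℝ} (hθ : 1 < θ) : Summable fun k:ℕ => ((k:ℝ)+1)^(-θ) := by
  have h : Summable fun n:ℕ => ((n:ℝ))^(-θ) := Real.summable_nat_rpow.2 (by linarith)
  have := (summable_nat_add_iff 1).2 h
  simpa using this

lemma zet_nonneg {θ : ℝ} : 0 ≤ Zet θ := tsum_nonneg fun k => Real.rpow_nonneg (by positivity) _

lemma partial_le_zet {θ : ℝ} (hθ : 1 < θ) (n : ℕ) :
    ∑ k ∈ range n, ((k:ℝ)+1)^(-θ) ≤ Zet θ :=
  Summable.sum_le_tsum (range n) (fun k _ => Real.rpow_nonneg (by positivity) _) (summable_zet hθ)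

lemma sum_blocks (σ : ℕ → ℕ) (G : ℕ → ℝ) :
    ∀ n, (∀ i < n, σ i ≤ σ (i+1)) →
    ∑ i ∈ range n, ∑ k ∈ Ico (σ i) (σ (i+1)), G k = ∑ k ∈ Ico (σ 0) (σ n), G k := by
  intro n
  induction n with
  | zero => simp
  | succ n ih =>
    intro h
    rw [Finset.sum_range_succ, ih (fun i hi => h i (by omega))]
    exact Finset.sum_Ico_consecutive G (steps_mono σ (n+1) h 0 n (by omega) (by omega))
      (h n (by omega))

lemma meshSum {θ : ℝ} (δ : ℝ) (hθ : 1 < θ) (hδ : 0 < δ) (n : ℕ) (x : ℕ → ℝ)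
    (hm : ∀ i < n, x i ≤ x (i+1)) (hmesh : ∀ i < n, x (i+1) - x i < δ) :
    ∑ i ∈ range n, (x (i+1) - x i)^θ ≤ δ^(θ-1) * (x n - x 0) := by
  have hterm : ∀ i ∈ range n, (x (i+1) - x i)^θ ≤ δ^(θ-1) * (x (i+1) - x i) := by
    intro i hi
    have h0 : (0:ℝ) ≤ x (i+1) - x i := by linarith [hm i (mem_range.mp hi)]
    have e : (x (i+1) - x i)^θ = (x (i+1) - x i)^(θ-1) * (x (i+1) - x i) := by
      nth_rewrite 1 [show θ = (θ-1)+1 by ring]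
      rw [Real.rpow_add' h0 (by linarith), Real.rpow_one]
    rw [e]
    exact mul_le_mul_of_nonneg_right
      (Real.rpow_le_rpow h0 (le_of_lt (hmesh i (mem_range.mp hi))) (by linarith)) h0
  calc ∑ i ∈ range n, (x (i+1) - x i)^θ
      ≤ ∑ i ∈ range n, δ^(θ-1) * (x (i+1) - x i) := Finset.sum_le_sum hterm
    _ = δ^(θ-1) * ∑ i ∈ range n, (x (i+1) - x i) := by rw [Finset.mul_sum]
    _ = δ^(θ-1) * (x n - x 0) := by rw [Finset.sum_range_sub]

lemma merge (n m : ℕ) (hn : 1 ≤ n) (hm : 1 ≤ m) (x u : ℕ → ℝ)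
    (hxm : ∀ i < n, x i ≤ x (i+1)) (hum : ∀ j < m, u j ≤ u (j+1))
    (h0 : x 0 = u 0) (hnm : x n = u m) :
    ∃ z : ℕ → ℝ, ∃ σ τ : ℕ → ℕ,
      (∀ k < n+m, z k ≤ z (k+1)) ∧
      (∀ k, k ≤ n+m → ∃ i, i ≤ n ∧ ∃ j, j ≤ m ∧ z k = max (x i) (u j)) ∧
      σ 0 = 0 ∧ σ n = n+m ∧ (∀ i < n, σ i ≤ σ (i+1)) ∧ (∀ i, i ≤ n → z (σ i) = x i) ∧
      τ 0 = 0 ∧ τ m = n+m ∧ (∀ j < m, τ j ≤ τ (j+1)) ∧ (∀ j, j ≤ m → z (τ j) = u j) := by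
  classical
  have hxmono : ∀ i j, i ≤ j → j ≤ n → x i ≤ x j := steps_mono x n hxm
  have humono : ∀ i j, i ≤ j → j ≤ m → u i ≤ u j := steps_mono u m hum
  set D : ℕ → Finset ℕ := fun k => (range (n+1)).filter (fun i => i ≤ k ∧ k ≤ i + m) with hD
  have hDmem : ∀ k i, i ∈ D k ↔ (i ≤ n ∧ i ≤ k ∧ k ≤ i + m) := by
    intro k i; simp only [hD, Finset.mem_filter, Finset.mem_range]; omega
  have hDne : ∀ k, k ≤ n+m → (D k).Nonempty :=
    fun k hk => ⟨min k n, (hDmem k _).2 (by omega)⟩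
  set z : ℕ → ℝ := fun k =>
    if h : (D k).Nonempty then (D k).inf' h (fun i => max (x i) (u (k-i))) else 0 with hz
  have hzle : ∀ k, k ≤ n+m → ∀ i, i ≤ n → i ≤ k → k ≤ i + m →
      z k ≤ max (x i) (u (k-i)) := by
    intro k hk i h1 h2 h3
    simp only [hz]
    rw [dif_pos (hDne k hk)]
    exact Finset.inf'_le _ ((hDmem k i).2 ⟨h1, h2, h3⟩)
  have hzge : ∀ k, k ≤ n+m → ∀ c : ℝ,
      (∀ i, i ≤ n → i ≤ k → k ≤ i + m → c ≤ max (x i) (u (k-i))) → c ≤ z k := by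
    intro k hk c hc
    simp only [hz]
    rw [dif_pos (hDne k hk)]
    refine Finset.le_inf' _ _ (fun i hi => ?_)
    obtain ⟨h1, h2, h3⟩ := (hDmem k i).1 hi
    exact hc i h1 h2 h3
  have hzex : ∀ k, k ≤ n+m → ∃ i, i ≤ n ∧ i ≤ k ∧ k ≤ i + m ∧
      z k = max (x i) (u (k-i)) := by
    intro k hk
    simp only [hz]
    rw [dif_pos (hDne k hk)]
    obtain ⟨i, hi, he⟩ := Finset.exists_mem_eq_inf' (hDne k hk) (fun i => max (x i) (u (k-i)))
    obtain ⟨h1, h2, h3⟩ := (hDmem k i).1 hi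
    exact ⟨i, h1, h2, h3, he⟩
  have hz0 : z 0 = x 0 := by
    obtain ⟨i, h1, h2, h3, he⟩ := hzex 0 (by omega)
    interval_cases i
    rw [he, Nat.sub_zero, h0, max_self, ← h0]
  have hzmono : ∀ k < n+m, z k ≤ z (k+1) := by
    intro k hk
    obtain ⟨i, hi1, hi2, hi3, he⟩ := hzex (k+1) (by omega)
    rcases Nat.eq_zero_or_pos i with rfl | hip
    · have hzk : z k ≤ max (x 0) (u (k-0)) := hzle k (by omega) 0 (by omega) (by omega) (by omega)
      rw [Nat.sub_zero] at hzk
      have hu1 : u k ≤ u (k+1) := hum k (by omega)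
      rw [he, Nat.sub_zero]
      exact hzk.trans (max_le_max le_rfl hu1)
    · have hzk : z k ≤ max (x (i-1)) (u (k-(i-1))) :=
        hzle k (by omega) (i-1) (by omega) (by omega) (by omega)
      have hidx : k - (i-1) = k+1-i := by omega
      rw [hidx] at hzk
      have hx1 : x (i-1) ≤ x i := by
        have h' := hxm (i-1) (by omega)
        rwa [show i-1+1 = i by omega] at h'
      rw [he]
      exact hzk.trans (max_le_max hx1 le_rfl)
  have hzmax : ∀ k, k ≤ n+m → ∃ i, i ≤ n ∧ ∃ j, j ≤ m ∧ z k = max (x i) (u j) := by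
    intro k hk
    obtain ⟨i, h1, h2, h3, he⟩ := hzex k hk
    exact ⟨i, h1, k-i, by omega, he⟩
  -- sigma
  set J : ℕ → ℕ := fun i => Nat.findGreatest (fun j => u j ≤ x i) m with hJ
  set σ : ℕ → ℕ := fun i => if i = 0 then 0 else i + J i with hσ
  have hJle : ∀ i, J i ≤ m := fun i => Nat.findGreatest_le (P := fun j => u j ≤ x i) m
  have hJspec : ∀ i, i ≤ n → u (J i) ≤ x i := by
    intro i hi
    have hu0 : u 0 ≤ x i := h0 ▸ hxmono 0 i (Nat.zero_le _) hi
    exact Nat.findGreatest_spec (P := fun j => u j ≤ x i) (Nat.zero_le m) hu0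
  have hσ0 : σ 0 = 0 := if_pos rfl
  have hσx : ∀ i, i ≤ n → z (σ i) = x i := by
    intro i hi
    rcases Nat.eq_zero_or_pos i with rfl | hip
    · rw [hσ0, hz0]
    · have hσi : σ i = i + J i := if_neg (by omega)
      rw [hσi]
      have hk : i + J i ≤ n + m := by have := hJle i; omega
      apply le_antisymm
      · have h' := hzle (i+J i) hk i hi (by omega) (by have := hJle i; omega)
        rw [show i + J i - i = J i by omega] at h'
        exact h'.trans (max_le le_rfl (hJspec i hi))
      · refine hzge (i+J i) hk _ (fun i' h1 h2 h3 => ?_)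
        rcases le_or_gt i i' with hcase | hcase
        · exact le_trans (hxmono i i' hcase h1) (le_max_left _ _)
        · have hj' : J i < i + J i - i' := by omega
          have hj'm : i + J i - i' ≤ m := by omega
          have hnot : ¬ (u (i + J i - i') ≤ x i) :=
            Nat.findGreatest_is_greatest (P := fun j => u j ≤ x i) hj' hj'm
          exact le_trans (le_of_lt (lt_of_not_ge hnot)) (le_max_right _ _)
  have hσn : σ n = n + m := by
    have hP : u m ≤ x n := le_of_eq hnm.symm
    have hJn : J n = m := by
      by_contra hne
      exact Nat.findGreatest_is_greatest (P := fun j => u j ≤ x n) (lt_of_le_of_ne (hJle n) hne) le_rfl hP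
    rw [show σ n = n + J n from if_neg (by omega), hJn]
  have hσm : ∀ i < n, σ i ≤ σ (i+1) := by
    intro i hi
    rcases Nat.eq_zero_or_pos i with rfl | hip
    · rw [hσ0]; exact Nat.zero_le _
    · rw [show σ i = i + J i from if_neg (by omega),
        show σ (i+1) = (i+1) + J (i+1) from if_neg (by omega)]
      have : J i ≤ J (i+1) :=
        Nat.findGreatest_mono (P := fun j => u j ≤ x i) (Q := fun j => u j ≤ x (i+1))
          (fun j hj => hj.trans (hxm i hi)) le_rfl
      omega
  -- tau
  set I : ℕ → ℕ := fun j => Nat.findGreatest (fun i => x i ≤ u j) n with hI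
  set τ : ℕ → ℕ := fun j => if j = 0 then 0 else I j + j with hτ
  have hIle : ∀ j, I j ≤ n := fun j => Nat.findGreatest_le (P := fun i => x i ≤ u j) n
  have hIspec : ∀ j, j ≤ m → x (I j) ≤ u j := by
    intro j hj
    have hx0 : x 0 ≤ u j := h0 ▸ humono 0 j (Nat.zero_le _) hj
    exact Nat.findGreatest_spec (P := fun i => x i ≤ u j) (Nat.zero_le n) hx0
  have hτ0 : τ 0 = 0 := if_pos rfl
  have hτx : ∀ j, j ≤ m → z (τ j) = u j := by
    intro j hj
    rcases Nat.eq_zero_or_pos j with rfl | hjp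
    · rw [hτ0, hz0, h0]
    · have hτj : τ j = I j + j := if_neg (by omega)
      rw [hτj]
      have hk : I j + j ≤ n + m := by have := hIle j; omega
      apply le_antisymm
      · have h' := hzle (I j + j) hk (I j) (hIle j) (by omega) (by omega)
        rw [show I j + j - I j = j by omega] at h'
        exact h'.trans (max_le (hIspec j hj) le_rfl)
      · refine hzge (I j + j) hk _ (fun i' h1 h2 h3 => ?_)
        rcases le_or_gt i' (I j) with hcase | hcase
        · have hidx : j ≤ I j + j - i' := by omega
          have hidx2 : I j + j - i' ≤ m := by omega
          exact le_trans (humono j (I j + j - i') hidx hidx2) (le_max_right _ _)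
        · have hnot : ¬ (x i' ≤ u j) :=
            Nat.findGreatest_is_greatest (P := fun i => x i ≤ u j) hcase h1
          exact le_trans (le_of_lt (lt_of_not_ge hnot)) (le_max_left _ _)
  have hτm : τ m = n + m := by
    have hP : x n ≤ u m := le_of_eq hnm
    have hIm : I m = n := by
      by_contra hne
      exact Nat.findGreatest_is_greatest (P := fun i => x i ≤ u m) (lt_of_le_of_ne (hIle m) hne) le_rfl hP
    rw [show τ m = I m + m from if_neg (by omega), hIm]
  have hτmm : ∀ j < m, τ j ≤ τ (j+1) := by
    intro j hj
    rcases Nat.eq_zero_or_pos j with rfl | hjp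
    · rw [hτ0]; exact Nat.zero_le _
    · rw [show τ j = I j + j from if_neg (by omega),
        show τ (j+1) = I (j+1) + (j+1) from if_neg (by omega)]
      have : I j ≤ I (j+1) :=
        Nat.findGreatest_mono (P := fun i => x i ≤ u j) (Q := fun i => x i ≤ u (j+1))
          (fun i hi => hi.trans (hum j hj)) le_rfl
      omega
  exact ⟨z, σ, τ, hzmono, hzmax, hσ0, hσn, hσm, hσx, hτ0, hτm, hτmm, hτx⟩

section Main

variable {a b α β : ℝ} {f g : ℝ → ℝ} {Cf Cg : ℝ}
variable (hCf : 0 ≤ Cf) (hCg : 0 ≤ Cg) (hα : 0 < α) (hβ : 0 < β) (hαβ : 1 < α + β)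
variable (hf : ∀ x ∈ Icc a b, ∀ y ∈ Icc a b, |f x - f y| ≤ Cf * |x - y| ^ α)
variable (hg : ∀ x ∈ Icc a b, ∀ y ∈ Icc a b, |g x - g y| ≤ Cg * |x - y| ^ β)

include hCf hCg hα hβ hαβ hf hg

lemma pairBound {u v p q d : ℝ} (hu : u ∈ Icc a b) (hv : v ∈ Icc a b)
    (hp : p ∈ Icc a b) (hq : q ∈ Icc a b) (hd : 0 ≤ d)
    (h1 : |u - v| ≤ d) (h2 : |p - q| ≤ d) :
    |(f u - f v) * (g p - g q)| ≤ Cf * Cg * d ^ (α + β) := by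
  rw [abs_mul]
  calc |f u - f v| * |g p - g q|
      ≤ (Cf * |u - v| ^ α) * (Cg * |p - q| ^ β) :=
        mul_le_mul (hf u hu v hv) (hg p hp q hq) (abs_nonneg _) (by positivity)
    _ ≤ (Cf * d ^ α) * (Cg * d ^ β) := by
        have e1 : |u-v|^α ≤ d^α := Real.rpow_le_rpow (abs_nonneg _) h1 hα.le
        have e2 : |p-q|^β ≤ d^β := Real.rpow_le_rpow (abs_nonneg _) h2 hβ.le
        have n1 : (0:ℝ) ≤ |u-v|^α := Real.rpow_nonneg (abs_nonneg _) α
        have n2 : (0:ℝ) ≤ |p-q|^β := Real.rpow_nonneg (abs_nonneg _) β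
        have n3 : (0:ℝ) ≤ d^β := Real.rpow_nonneg hd β
        have n4 : (0:ℝ) ≤ d^α := Real.rpow_nonneg hd α
        have m1 : Cf * |u-v|^α ≤ Cf * d^α := mul_le_mul_of_nonneg_left e1 hCf
        have m2 : Cg * |p-q|^β ≤ Cg * d^β := mul_le_mul_of_nonneg_left e2 hCg
        exact mul_le_mul m1 m2 (by positivity) (by positivity)
    _ = Cf * Cg * d ^ (α + β) := by
        rw [Real.rpow_add' hd (by linarith)]; ring

lemma lemA :
    ∀ n : ℕ, ∀ x ξ : ℕ → ℝ, (∀ i, i ≤ n → x i ∈ Icc a b) → (∀ i < n, x i ≤ x (i+1)) →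
    (∀ i < n, ξ i ∈ Icc (x i) (x (i+1))) → ∀ ζ ∈ Icc (x 0) (x n),
    |∑ i ∈ range n, f (ξ i) * (g (x (i+1)) - g (x i)) - f ζ * (g (x n) - g (x 0))|
      ≤ Cf * Cg * (1 + 2^(α+β) * ∑ k ∈ range (n-1), ((k:ℝ)+1)^(-(α+β))) * (x n - x 0)^(α+β) := by
  intro n
  induction n with
  | zero =>
    intro x ξ hx hm ht ζ hζ
    simp [Real.zero_rpow (show α+β ≠ 0 by positivity)]
  | succ n ih =>
    intro x ξ hx hm ht ζ hζ
    have hspan : ∀ i j, i ≤ j → j ≤ n+1 → x i ≤ x j := steps_mono x (n+1) hm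
    rcases Nat.eq_zero_or_pos n with rfl | hn
    · -- single interval
      simp only [zero_add, Nat.sub_self, Finset.range_zero, Finset.sum_empty,
        mul_zero, add_zero, mul_one] at hζ ⊢
      have hξ0 : ξ 0 ∈ Icc (x 0) (x 1) := by simpa using ht 0 (by omega)
      have h01 : x 0 ≤ x 1 := by simpa using hm 0 (by omega)
      have key := pairBound hCf hCg hα hβ hαβ hf hg
        (Icc_subset_Icc (hx 0 (by omega)).1 (by simpa using (hx 1 (by omega)).2) hξ0)
        (Icc_subset_Icc (hx 0 (by omega)).1 (by simpa using (hx 1 (by omega)).2) hζ)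
        (by simpa using hx 1 (by omega)) (hx 0 (by omega))
        (show (0:ℝ) ≤ x 1 - x 0 by linarith)
        (by rw [abs_sub_le_iff]; constructor <;> linarith [hξ0.1, hξ0.2, hζ.1, hζ.2])
        (by rw [abs_sub_le_iff]; constructor <;> linarith)
      rw [Finset.sum_range_one]
      simp only [zero_add]
      have hrw : f (ξ 0) * (g (x 1) - g (x 0)) - f ζ * (g (x 1) - g (x 0))
          = (f (ξ 0) - f ζ) * (g (x 1) - g (x 0)) := by ring
      rw [hrw]
      exact key
    · -- at least two intervals: delete a point
      have htel : ∑ p ∈ range n, (x (p+2) - x p) ≤ 2*(x (n+1) - x 0) := by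
        have h1 : ∑ p ∈ range n, (x (p+2) - x (p+1)) = x (n+1) - x 1 := by
          simpa using Finset.sum_range_sub (fun p => x (p+1)) n
        have h2 : ∑ p ∈ range n, (x (p+1) - x p) = x n - x 0 := Finset.sum_range_sub x n
        have h3 : ∑ p ∈ range n, (x (p+2) - x p)
            = (x (n+1) - x 1) + (x n - x 0) := by
          rw [← h1, ← h2, ← Finset.sum_add_distrib]
          exact sum_congr rfl (fun i _ => by ring)
        have hx1 : x 0 ≤ x 1 := hspan 0 1 (by omega) (by omega)
        have hxn : x n ≤ x (n+1) := hspan n (n+1) (by omega) (by omega)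
        linarith
      have hex : ∃ p, p < n ∧ x (p+2) - x p ≤ 2*(x (n+1) - x 0)/n := by
        by_contra hc
        push_neg at hc
        have hlt : ∑ p ∈ range n, (2*(x (n+1) - x 0)/n) < ∑ p ∈ range n, (x (p+2) - x p) :=
          Finset.sum_lt_sum_of_nonempty (Finset.nonempty_range_iff.2 (by omega))
            (fun p hp => hc p (mem_range.mp hp))
        rw [Finset.sum_const, card_range, nsmul_eq_mul] at hlt
        have hne : (n:ℝ) ≠ 0 := Nat.cast_ne_zero.2 (by omega)
        have hcalc : (n:ℝ) * (2*(x (n+1) - x 0)/n) = 2*(x (n+1) - x 0) := by field_simp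
        linarith
      obtain ⟨p, hp, hpd⟩ := hex
      set x' : ℕ → ℝ := fun j => if j ≤ p then x j else x (j+1) with hx'def
      set ξ' : ℕ → ℝ := fun j => if j ≤ p then ξ j else ξ (j+1) with hξ'def
      have hx'0 : x' 0 = x 0 := by simp [hx'def]
      have hx'n : x' n = x (n+1) := by simp [hx'def, Nat.not_le.2 hp]
      have hm' : ∀ j < n, x' j ≤ x' (j+1) := by
        intro j hj
        rcases lt_trichotomy j p with h | h | h
        · simp only [hx'def, if_pos h.le, if_pos (by omega : j+1 ≤ p)]
          exact hm j (by omega)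
        · subst h
          simp only [hx'def, if_pos (le_refl j), if_neg (by omega : ¬ j+1 ≤ j)]
          exact hspan j (j+2) (by omega) (by omega)
        · simp only [hx'def, if_neg (by omega : ¬ j ≤ p), if_neg (by omega : ¬ j+1 ≤ p)]
          exact hm (j+1) (by omega)
      have hx'' : ∀ j, j ≤ n → x' j ∈ Icc a b := by
        intro j hj
        by_cases h : j ≤ p
        · simpa [hx'def, if_pos h] using hx j (by omega)
        · simpa [hx'def, if_neg h] using hx (j+1) (by omega)
      have ht' : ∀ j < n, ξ' j ∈ Icc (x' j) (x' (j+1)) := by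
        intro j hj
        rcases lt_trichotomy j p with h | h | h
        · simpa [hx'def, hξ'def, if_pos h.le, if_pos (by omega : j+1 ≤ p)] using ht j (by omega)
        · subst h
          have h1 := ht j (by omega)
          have e1 : x' j = x j := if_pos (le_refl j)
          have e2 : x' (j+1) = x (j+2) := if_neg (by omega)
          have e3 : ξ' j = ξ j := if_pos (le_refl j)
          rw [e1, e2, e3]
          exact ⟨h1.1, h1.2.trans (hspan (j+1) (j+2) (by omega) (by omega))⟩
        · simpa [hx'def, hξ'def, if_neg (by omega : ¬ j ≤ p),
            if_neg (by omega : ¬ j+1 ≤ p)] using ht (j+1) (by omega)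
      have hζ' : ζ ∈ Icc (x' 0) (x' n) := by rw [hx'0, hx'n]; exact hζ
      -- sum identity
      have hS : ∑ j ∈ range (n+1), f (ξ j) * (g (x (j+1)) - g (x j))
          = (∑ j ∈ range p, f (ξ j) * (g (x (j+1)) - g (x j)))
            + f (ξ p) * (g (x (p+1)) - g (x p))
            + f (ξ (p+1)) * (g (x (p+2)) - g (x (p+1)))
            + ∑ j ∈ Ico (p+2) (n+1), f (ξ j) * (g (x (j+1)) - g (x j)) := by
        rw [← sum_range_add_sum_Ico _ (by omega : p+2 ≤ n+1),
          Finset.sum_range_succ, Finset.sum_range_succ]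
      have hS' : ∑ j ∈ range n, f (ξ' j) * (g (x' (j+1)) - g (x' j))
          = (∑ j ∈ range p, f (ξ j) * (g (x (j+1)) - g (x j)))
            + f (ξ p) * (g (x (p+2)) - g (x p))
            + ∑ j ∈ Ico (p+2) (n+1), f (ξ j) * (g (x (j+1)) - g (x j)) := by
        rw [← sum_range_add_sum_Ico _ (by omega : p+1 ≤ n), Finset.sum_range_succ]
        congr 1
        · congr 1
          · exact sum_congr rfl (fun j hj => by
              have hj' := mem_range.mp hj
              simp [hx'def, hξ'def, if_pos hj'.le, if_pos (by omega : j ≤ p),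
                if_pos (by omega : j+1 ≤ p)])
          · simp [hx'def, hξ'def, if_pos (le_refl p), if_neg (by omega : ¬ p+1 ≤ p)]
        · rw [Finset.sum_Ico_eq_sum_range, Finset.sum_Ico_eq_sum_range]
          have hcard : n - (p+1) = n+1 - (p+2) := by omega
          rw [← hcard]
          exact sum_congr rfl (fun k hk => by
            simp only [hx'def, hξ'def, if_neg (by omega : ¬ p+1+k ≤ p),
              if_neg (by omega : ¬ p+1+k+1 ≤ p)]
            rw [show p+1+k+1 = p+2+k by omega])
      have hsum : ∑ j ∈ range (n+1), f (ξ j) * (g (x (j+1)) - g (x j))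
          = (∑ j ∈ range n, f (ξ' j) * (g (x' (j+1)) - g (x' j)))
            + (f (ξ (p+1)) - f (ξ p)) * (g (x (p+2)) - g (x (p+1))) := by
        rw [hS, hS']; ring
      have hT : (0:ℝ) ≤ x (n+1) - x 0 := by
        have := hspan 0 (n+1) (by omega) (by omega); linarith
      have hd0 : (0:ℝ) ≤ x (p+2) - x p := by
        have := hspan p (p+2) (by omega) (by omega); linarith
      have hcost : |(f (ξ (p+1)) - f (ξ p)) * (g (x (p+2)) - g (x (p+1)))|
          ≤ Cf * Cg * (x (p+2) - x p) ^ (α+β) := by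
        have h1 := ht p (by omega)
        have h2 := ht (p+1) (by omega)
        have hxp1 : x p ≤ x (p+1) := hm p (by omega)
        have hxp2 : x (p+1) ≤ x (p+2) := hm (p+1) (by omega)
        exact pairBound hCf hCg hα hβ hαβ hf hg
          (Icc_subset_Icc (hx (p+1) (by omega)).1 (hx (p+2) (by omega)).2 h2)
          (Icc_subset_Icc (hx p (by omega)).1 (hx (p+1) (by omega)).2 h1)
          (hx (p+2) (by omega)) (hx (p+1) (by omega)) hd0
          (by rw [abs_sub_le_iff]
              constructor <;> linarith [h1.1, h1.2, h2.1, h2.2])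
          (by rw [abs_sub_le_iff]; constructor <;> linarith)
      have hdle : (x (p+2) - x p) ^ (α+β)
          ≤ 2^(α+β) * (x (n+1) - x 0)^(α+β) * ((n:ℝ))^(-(α+β)) := by
        have hn' : (0:ℝ) < (n:ℝ) := by exact_mod_cast hn
        have h2T : (0:ℝ) ≤ 2*(x (n+1) - x 0) := by linarith
        have step1 : (x (p+2) - x p) ^ (α+β) ≤ (2*(x (n+1) - x 0)/(n:ℝ)) ^ (α+β) :=
          Real.rpow_le_rpow hd0 hpd (by linarith)
        have step2 : (2*(x (n+1) - x 0)/(n:ℝ)) ^ (α+β)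
            = 2^(α+β) * (x (n+1) - x 0)^(α+β) * (((n:ℝ))^(α+β))⁻¹ := by
          rw [Real.div_rpow h2T hn'.le, Real.mul_rpow (by norm_num) hT, div_eq_mul_inv]
        rw [Real.rpow_neg hn'.le]
        rw [step2] at step1
        exact step1
      have hIH := ih x' ξ' (fun i hi => hx'' i hi) hm' ht' ζ hζ'
      rw [hx'0, hx'n] at hIH
      have htri : |∑ j ∈ range (n+1), f (ξ j) * (g (x (j+1)) - g (x j))
            - f ζ * (g (x (n+1)) - g (x 0))|
          ≤ |∑ j ∈ range n, f (ξ' j) * (g (x' (j+1)) - g (x' j))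
              - f ζ * (g (x (n+1)) - g (x 0))|
            + |(f (ξ (p+1)) - f (ξ p)) * (g (x (p+2)) - g (x (p+1)))| := by
        rw [hsum]
        have e : (∑ j ∈ range n, f (ξ' j) * (g (x' (j+1)) - g (x' j)))
              + (f (ξ (p+1)) - f (ξ p)) * (g (x (p+2)) - g (x (p+1)))
              - f ζ * (g (x (n+1)) - g (x 0))
            = (∑ j ∈ range n, f (ξ' j) * (g (x' (j+1)) - g (x' j))
                - f ζ * (g (x (n+1)) - g (x 0)))
              + (f (ξ (p+1)) - f (ξ p)) * (g (x (p+2)) - g (x (p+1))) := by ring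
        rw [e]
        exact abs_add_le _ _
      have hmono := mul_le_mul_of_nonneg_left hdle (mul_nonneg hCf hCg)
      have hstep := htri.trans (add_le_add hIH hcost)
      have hzs : ∑ k ∈ range n, ((k:ℝ)+1)^(-(α+β))
          = (∑ k ∈ range (n-1), ((k:ℝ)+1)^(-(α+β))) + ((n:ℝ))^(-(α+β)) := by
        conv_lhs => rw [show n = (n-1)+1 by omega]
        rw [Finset.sum_range_succ]
        have hcast : ((n-1:ℕ):ℝ)+1 = (n:ℝ) := by
          rw [Nat.cast_sub (by omega : 1 ≤ n)]; push_cast; ring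
        rw [hcast]
      rw [show (n+1-1:ℕ) = n by omega, hzs]
      nlinarith [hstep, hmono]

lemma lemB (n : ℕ) (x ξ : ℕ → ℝ) (hx : ∀ i, i ≤ n → x i ∈ Icc a b)
    (hm : ∀ i < n, x i ≤ x (i+1)) (ht : ∀ i < n, ξ i ∈ Icc (x i) (x (i+1)))
    (N : ℕ) (z : ℕ → ℝ) (hz : ∀ k, k ≤ N → z k ∈ Icc a b)
    (hzm : ∀ k < N, z k ≤ z (k+1))
    (σ : ℕ → ℕ) (hσ0 : σ 0 = 0) (hσn : σ n = N) (hσm : ∀ i < n, σ i ≤ σ (i+1))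
    (hσx : ∀ i, i ≤ n → z (σ i) = x i) :
    |∑ i ∈ range n, f (ξ i) * (g (x (i+1)) - g (x i))
      - ∑ k ∈ range N, f (z k) * (g (z (k+1)) - g (z k))|
    ≤ ∑ i ∈ range n, Cf*Cg*(1 + 2^(α+β) * Zet (α+β)) * (x (i+1) - x i)^(α+β) := by
  have hσmono : ∀ i j, i ≤ j → j ≤ n → σ i ≤ σ j := steps_mono σ n hσm
  have hσle : ∀ i, i ≤ n → σ i ≤ N := fun i hi => hσn ▸ hσmono i n hi le_rfl
  have hdec : ∑ k ∈ range N, f (z k) * (g (z (k+1)) - g (z k))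
      = ∑ i ∈ range n, ∑ k ∈ Ico (σ i) (σ (i+1)), f (z k) * (g (z (k+1)) - g (z k)) := by
    rw [sum_blocks σ _ n hσm, hσ0, hσn, Finset.range_eq_Ico]
  have hblock : ∀ i ∈ range n,
      |f (ξ i) * (g (x (i+1)) - g (x i))
        - ∑ k ∈ Ico (σ i) (σ (i+1)), f (z k) * (g (z (k+1)) - g (z k))|
      ≤ Cf*Cg*(1 + 2^(α+β) * Zet (α+β)) * (x (i+1) - x i)^(α+β) := by
    intro i hi
    have hin : i < n := mem_range.mp hi
    set L : ℕ := σ (i+1) - σ i with hL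
    set y : ℕ → ℝ := fun j => z (σ i + j) with hy
    have hLe : σ i + L = σ (i+1) := by
      have := hσm i hin; omega
    have hy0 : y 0 = x i := by
      show z (σ i + 0) = x i
      rw [Nat.add_zero]; exact hσx i (by omega)
    have hyL : y L = x (i+1) := by
      show z (σ i + L) = x (i+1)
      rw [hLe]; exact hσx (i+1) (by omega)
    have hiN : σ (i+1) ≤ N := hσle (i+1) (by omega)
    have hyIcc : ∀ j, j ≤ L → y j ∈ Icc a b := by
      intro j hj; exact hz (σ i + j) (by omega)
    have hym : ∀ j < L, y j ≤ y (j+1) := by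
      intro j hj; exact hzm (σ i + j) (by omega)
    have hηt : ∀ j < L, y j ∈ Icc (y j) (y (j+1)) :=
      fun j hj => ⟨le_refl _, hym j hj⟩
    have hζ : ξ i ∈ Icc (y 0) (y L) := by
      rw [hy0, hyL]; exact ht i hin
    have hA := lemA hCf hCg hα hβ hαβ hf hg L y y hyIcc hym hηt (ξ i) hζ
    rw [hy0, hyL] at hA
    have hB : ∑ k ∈ Ico (σ i) (σ (i+1)), f (z k) * (g (z (k+1)) - g (z k))
        = ∑ j ∈ range L, f (y j) * (g (y (j+1)) - g (y j)) := by
      rw [Finset.sum_Ico_eq_sum_range]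
      exact Finset.sum_congr (by rw [hL]) (fun j _ => rfl)
    rw [hB, abs_sub_comm]
    refine hA.trans ?_
    have hE : (0:ℝ) ≤ (x (i+1) - x i)^(α+β) := by
      have := hm i hin
      exact Real.rpow_nonneg (by linarith) _
    have hbr : (1 + 2^(α+β) * ∑ k ∈ range (L-1), ((k:ℝ)+1)^(-(α+β)))
        ≤ 1 + 2^(α+β) * Zet (α+β) := by
      have h2 : (0:ℝ) < 2^(α+β) := Real.rpow_pos_of_pos (by norm_num) _
      nlinarith [partial_le_zet hαβ (L-1)]
    have := mul_le_mul_of_nonneg_right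
      (mul_le_mul_of_nonneg_left hbr (mul_nonneg hCf hCg)) hE
    linarith
  calc |∑ i ∈ range n, f (ξ i) * (g (x (i+1)) - g (x i))
        - ∑ k ∈ range N, f (z k) * (g (z (k+1)) - g (z k))|
      = |∑ i ∈ range n, (f (ξ i) * (g (x (i+1)) - g (x i))
          - ∑ k ∈ Ico (σ i) (σ (i+1)), f (z k) * (g (z (k+1)) - g (z k)))| := by
        rw [hdec, ← Finset.sum_sub_distrib]
    _ ≤ ∑ i ∈ range n, |f (ξ i) * (g (x (i+1)) - g (x i))
          - ∑ k ∈ Ico (σ i) (σ (i+1)), f (z k) * (g (z (k+1)) - g (z k))| :=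
        Finset.abs_sum_le_sum_abs _ _
    _ ≤ ∑ i ∈ range n, Cf*Cg*(1 + 2^(α+β) * Zet (α+β)) * (x (i+1) - x i)^(α+β) :=
        Finset.sum_le_sum hblock

end Main

end YoungAux

open YoungAux Filter Topology in
/-- Young's criterion in Hölder form: if `f` is `α`-Hölder, `g` is `β`-Hölder on `[a,b]`
and `α + β > 1`, then the Riemann–Stieltjes integral `∫_a^b f dg` exists as a limit of
Riemann–Stieltjes sums. -/
theorem young_holder_riemann_stieltjes_existence
    (a b : ℝ) (hab : a < b) (α β : ℝ) (hα : α ∈ Set.Ioc (0 : ℝ) 1)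
    (hβ : β ∈ Set.Ioc (0 : ℝ) 1) (hαβ : α + β > 1)
    (f g : ℝ → ℝ) (Cf Cg : ℝ) (hCf : 0 ≤ Cf) (hCg : 0 ≤ Cg)
    (hf : ∀ x ∈ Set.Icc a b, ∀ y ∈ Set.Icc a b, |f x - f y| ≤ Cf * |x - y| ^ α)
    (hg : ∀ x ∈ Set.Icc a b, ∀ y ∈ Set.Icc a b, |g x - g y| ≤ Cg * |x - y| ^ β) :
    ∃ I : ℝ, ∀ ε > 0, ∃ δ > 0, ∀ (n : ℕ) (x ξ : ℕ → ℝ),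
      x 0 = a → x n = b → (∀ i < n, x i ≤ x (i + 1)) →
      (∀ i < n, x (i + 1) - x i < δ) →
      (∀ i < n, ξ i ∈ Set.Icc (x i) (x (i + 1))) →
      |∑ i ∈ Finset.range n, f (ξ i) * (g (x (i + 1)) - g (x i)) - I| < ε := by
  obtain ⟨hα0, hα1⟩ := hα
  obtain ⟨hβ0, hβ1⟩ := hβ
  have hba : (0:ℝ) ≤ b - a := by linarith
  have h2pos : (0:ℝ) < 2^(α+β) := Real.rpow_pos_of_pos (by norm_num) _
  have hK0 : (0:ℝ) ≤ Cf*Cg*(1 + 2^(α+β) * Zet (α+β)) := by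
    have hz := zet_nonneg (θ := α+β)
    have : (0:ℝ) ≤ 2^(α+β) * Zet (α+β) := mul_nonneg h2pos.le hz
    have := mul_nonneg hCf hCg
    nlinarith
  set U : ℕ → ℕ → ℝ := fun M k => a + (k:ℝ)*(b-a)/((M:ℝ)+1) with hU
  have hUstepval : ∀ M k, U M (k+1) - U M k = (b-a)/((M:ℝ)+1) := by
    intro M k; simp only [hU]; push_cast; ring
  have hUstep : ∀ M k, U M k ≤ U M (k+1) := by
    intro M k
    have h2 : (0:ℝ) ≤ (b-a)/((M:ℝ)+1) := div_nonneg hba (by positivity)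
    rw [← hUstepval M k] at h2
    exact sub_nonneg.mp h2
  have hU0 : ∀ M, U M 0 = a := by intro M; simp [hU]
  have hUtop : ∀ M, U M (M+1) = b := by
    intro M
    have hne : ((M:ℝ)+1) ≠ 0 := by positivity
    simp only [hU]; push_cast; field_simp
    ring
  have hUIcc : ∀ M k, k ≤ M+1 → U M k ∈ Set.Icc a b := by
    intro M k hk
    constructor
    · simp only [hU]
      have : (0:ℝ) ≤ (k:ℝ)*(b-a)/((M:ℝ)+1) :=
        div_nonneg (mul_nonneg (Nat.cast_nonneg k) hba) (by positivity)
      linarith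
    · simp only [hU]
      have hkM : (k:ℝ) ≤ (M:ℝ)+1 := by exact_mod_cast hk
      have : (k:ℝ)*(b-a)/((M:ℝ)+1) ≤ b - a := by
        rw [div_le_iff₀ (by positivity : (0:ℝ) < (M:ℝ)+1)]
        nlinarith
      linarith
  set S : ℕ → ℝ := fun M => ∑ k ∈ range (M+1), f (U M k) * (g (U M (k+1)) - g (U M k)) with hS
  set EE : ℕ → ℝ := fun M =>
    ((M:ℝ)+1) * (Cf*Cg*(1 + 2^(α+β) * Zet (α+β)) * ((b-a)/((M:ℝ)+1))^(α+β)) with hEE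
  have husum : ∀ M, ∑ j ∈ range (M+1),
      Cf*Cg*(1 + 2^(α+β) * Zet (α+β)) * (U M (j+1) - U M j)^(α+β) = EE M := by
    intro M
    have : ∀ j ∈ range (M+1),
        Cf*Cg*(1 + 2^(α+β) * Zet (α+β)) * (U M (j+1) - U M j)^(α+β)
        = Cf*Cg*(1 + 2^(α+β) * Zet (α+β)) * ((b-a)/((M:ℝ)+1))^(α+β) := by
      intro j _; rw [hUstepval M j]
    rw [Finset.sum_congr rfl this, Finset.sum_const, card_range, nsmul_eq_mul]
    simp only [hEE]
    push_cast
    ring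
  have hcomp : ∀ (n : ℕ) (x ξ : ℕ → ℝ), 1 ≤ n → x 0 = a → x n = b →
      (∀ i < n, x i ≤ x (i+1)) → (∀ i < n, ξ i ∈ Set.Icc (x i) (x (i+1))) → ∀ M : ℕ,
      |(∑ i ∈ range n, f (ξ i) * (g (x (i+1)) - g (x i))) - S M|
        ≤ (∑ i ∈ range n, Cf*Cg*(1 + 2^(α+β) * Zet (α+β)) * (x (i+1) - x i)^(α+β)) + EE M := by
    intro n x ξ hn hx0 hxn hm ht M
    have hxIcc : ∀ i, i ≤ n → x i ∈ Set.Icc a b := by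
      intro i hi
      constructor
      · rw [← hx0]; exact steps_mono x n hm 0 i (Nat.zero_le _) hi
      · rw [← hxn]; exact steps_mono x n hm i n hi le_rfl
    obtain ⟨z, σ, τ, hzm, hzmax, hσ0, hσn, hσm, hσx, hτ0, hτm, hτmm, hτx⟩ :=
      merge n (M+1) hn (by omega) x (U M) hm (fun j _ => hUstep M j)
        (by rw [hx0, hU0]) (by rw [hxn, hUtop])
    have hzIcc : ∀ k, k ≤ n+(M+1) → z k ∈ Set.Icc a b := by
      intro k hk
      obtain ⟨i, hi, j, hj, he⟩ := hzmax k hk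
      rw [he]
      have h1 := hxIcc i hi
      have h2 := hUIcc M j hj
      exact ⟨le_max_of_le_left h1.1, max_le h1.2 h2.2⟩
    have hB1 := lemB hCf hCg hα0 hβ0 hαβ hf hg n x ξ hxIcc hm ht
      (n+(M+1)) z hzIcc hzm σ hσ0 hσn hσm hσx
    have hB2 := lemB hCf hCg hα0 hβ0 hαβ hf hg (M+1) (U M) (U M)
      (fun j hj => hUIcc M j hj) (fun j _ => hUstep M j)
      (fun j hj => ⟨le_rfl, hUstep M j⟩)
      (n+(M+1)) z hzIcc hzm τ hτ0 hτm hτmm hτx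
    rw [husum M] at hB2
    have htri := abs_sub_le
      (∑ i ∈ range n, f (ξ i) * (g (x (i+1)) - g (x i)))
      (∑ k ∈ range (n+(M+1)), f (z k) * (g (z (k+1)) - g (z k)))
      (S M)
    have hB2' : |(∑ k ∈ range (n+(M+1)), f (z k) * (g (z (k+1)) - g (z k))) - S M| ≤ EE M := by
      rw [abs_sub_comm]
      exact hB2
    linarith
  have hEf : ∀ M:ℕ, EE M = (Cf*Cg*(1 + 2^(α+β) * Zet (α+β))*(b-a)^(α+β))
      * (((M:ℝ)+1)^((α+β)-1))⁻¹ := by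
    intro M
    have hM1 : (0:ℝ) < (M:ℝ)+1 := by positivity
    have hMne : (((M:ℝ)+1)^((α+β)-1)) ≠ 0 := (Real.rpow_pos_of_pos hM1 _).ne'
    simp only [hEE]
    rw [Real.div_rpow hba hM1.le]
    have hpow : ((M:ℝ)+1)^(α+β) = ((M:ℝ)+1)^((α+β)-1) * ((M:ℝ)+1) := by
      nth_rewrite 1 [show (α+β) = ((α+β)-1)+1 by ring]
      rw [Real.rpow_add' hM1.le (by linarith), Real.rpow_one]
    rw [hpow]
    field_simp
  have hE : Tendsto EE atTop (nhds 0) := by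
    have h1 : Tendsto (fun M:ℕ => ((M:ℝ)+1)) atTop atTop :=
      tendsto_atTop_add_const_right _ 1 tendsto_natCast_atTop_atTop
    have h2 : Tendsto (fun M:ℕ => ((M:ℝ)+1)^((α+β)-1)) atTop atTop :=
      (tendsto_rpow_atTop (by linarith)).comp h1
    have h3 : Tendsto (fun M:ℕ => (((M:ℝ)+1)^((α+β)-1))⁻¹) atTop (nhds 0) :=
      h2.inv_tendsto_atTop
    have h4 := h3.const_mul (Cf*Cg*(1 + 2^(α+β) * Zet (α+β))*(b-a)^(α+β))
    rw [mul_zero] at h4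
    exact Tendsto.congr (fun M => (hEf M).symm) h4
  have hbound : ∀ M M' : ℕ, |S M - S M'| ≤ EE M + EE M' := by
    intro M M'
    have := hcomp (M+1) (U M) (U M) (by omega) (hU0 M) (hUtop M)
      (fun i _ => hUstep M i) (fun i _ => ⟨le_rfl, hUstep M i⟩) M'
    rw [husum M] at this
    exact this
  have hcs : CauchySeq S := by
    rw [Metric.cauchySeq_iff]
    intro ε hε
    obtain ⟨N, hN⟩ := (Metric.tendsto_atTop.mp hE) (ε/2) (by linarith)
    refine ⟨N, fun M hM M' hM' => ?_⟩
    have h1 := hbound M M'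
    have h2 := hN M hM
    have h3 := hN M' hM'
    rw [Real.dist_eq, sub_zero] at h2 h3
    have e2 : EE M < ε/2 := lt_of_le_of_lt (le_abs_self _) h2
    have e3 : EE M' < ε/2 := lt_of_le_of_lt (le_abs_self _) h3
    rw [Real.dist_eq]
    linarith
  obtain ⟨I, hI⟩ := cauchySeq_tendsto_of_complete hcs
  refine ⟨I, ?_⟩
  intro ε hε
  set KB : ℝ := Cf*Cg*(1 + 2^(α+β) * Zet (α+β))*(b-a) with hKB
  have hKB0 : 0 ≤ KB := mul_nonneg hK0 hba
  set r : ℝ := ε/(3*(KB+1)) with hr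
  have hr0 : 0 < r := by
    apply div_pos hε
    nlinarith
  set δ : ℝ := r^(1/((α+β)-1)) with hδ
  have hδ0 : 0 < δ := Real.rpow_pos_of_pos hr0 _
  have hδθ : δ^((α+β)-1) = r := by
    rw [hδ, ← Real.rpow_mul hr0.le, one_div,
      inv_mul_cancel₀ (by linarith : (α+β)-1 ≠ 0), Real.rpow_one]
  obtain ⟨N1, hN1⟩ := (Metric.tendsto_atTop.mp hE) (ε/3) (by linarith)
  obtain ⟨N2, hN2⟩ := (Metric.tendsto_atTop.mp hI) (ε/3) (by linarith)
  set M := max N1 N2 with hM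
  have hEM : EE M < ε/3 := by
    have := hN1 M (le_max_left _ _)
    rw [Real.dist_eq, sub_zero] at this
    exact lt_of_le_of_lt (le_abs_self _) this
  have hSI : |S M - I| < ε/3 := by
    have := hN2 M (le_max_right _ _)
    rw [Real.dist_eq] at this
    exact this
  refine ⟨δ, hδ0, ?_⟩
  intro n x ξ hx0 hxn hm hmesh ht
  have hn1 : 1 ≤ n := by
    rcases Nat.eq_zero_or_pos n with rfl | h
    · rw [hx0] at hxn; exact absurd hxn (ne_of_lt hab)
    · exact h
  have hc := hcomp n x ξ hn1 hx0 hxn hm ht M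
  have hmeshsum : ∑ i ∈ range n, Cf*Cg*(1 + 2^(α+β) * Zet (α+β)) * (x (i+1) - x i)^(α+β)
      ≤ ε/3 := by
    rw [← Finset.mul_sum]
    have h1 := meshSum δ hαβ hδ0 n x hm hmesh
    rw [hxn, hx0] at h1
    have h2 : Cf*Cg*(1 + 2^(α+β) * Zet (α+β)) * (∑ i ∈ range n, (x (i+1) - x i)^(α+β))
        ≤ Cf*Cg*(1 + 2^(α+β) * Zet (α+β)) * (δ^((α+β)-1) * (b-a)) :=
      mul_le_mul_of_nonneg_left h1 hK0
    rw [hδθ] at h2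
    have h3 : (KB+1)*r = ε/3 := by
      rw [hr]; field_simp
    have h4 : Cf*Cg*(1 + 2^(α+β) * Zet (α+β)) * (r * (b-a)) = KB * r := by
      rw [hKB]; ring
    nlinarith
  calc |∑ i ∈ Finset.range n, f (ξ i) * (g (x (i + 1)) - g (x i)) - I|
      ≤ |∑ i ∈ Finset.range n, f (ξ i) * (g (x (i + 1)) - g (x i)) - S M| + |S M - I| :=
        abs_sub_le _ _ _
    _ < ε := by
        have := hc
        linarith
end

section
/- Let Λ be the von Mangoldt function and ψ(x) = ∑_{1 ≤ n ≤ ⌊x⌋} Λ(n) the Chebyshev function. Suppose there is a constant C ≥ 0 such that |ψ(x) − x| ≤ C x^{1/2} for all x ≥ 1. Then for every real λ > 0, |∑_{n=1}^∞ Λ(n) (−1)^n e^{−λn} + (iπ − λ) ∫_1^∞ t e^{(iπ − λ)t} dt| ≤ C √(π² + λ²) · Γ(3/2)/λ^{3/2}. That is, the Stieltjes integral I = ∫_1^∞ e^{iπx} e^{−λx} dψ(x) equals the main Laplace-type term −(iπ − λ) ∫_1^∞ t e^{(iπ−λ)t} dt up to an error of size O(λ^{−3/2}). -/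
open MeasureTheory Set

/-- The Chebyshev function `ψ(x) = ∑_{1 ≤ n ≤ ⌊x⌋} Λ(n)`. -/
noncomputable def chebyshevPsi (x : ℝ) : ℝ :=
  ∑ n ∈ Finset.Icc 1 ⌊x⌋₊, ArithmeticFunction.vonMangoldt n

open Filter

local notation "Λ" => ArithmeticFunction.vonMangoldt

theorem aux_integrableOn_cexp (s : ℂ) (hs : s.re < 0) (a : ℝ) :
    IntegrableOn (fun t : ℝ => Complex.exp (s * t)) (Ioi a) := by
  have hnorm : ∀ t : ℝ, ‖Complex.exp (s * t)‖ = Real.exp (s.re * t) := by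
    intro t
    rw [Complex.norm_exp]
    congr 1
    simp [Complex.mul_re]
  have hint : IntegrableOn (fun t : ℝ => Real.exp (s.re * t)) (Ioi a) := by
    have := exp_neg_integrableOn_Ioi a (neg_pos.mpr hs)
    simpa [neg_mul, mul_comm] using this
  refine (hint.mono' ?_ ?_)
  · exact (Complex.continuous_exp.comp
      (continuous_const.mul Complex.continuous_ofReal)).aestronglyMeasurable
  · filter_upwards with t
    rw [hnorm t]

theorem aux_integral_cexp (s : ℂ) (hs : s.re < 0) (a : ℝ) :
    ∫ t : ℝ in Ioi a, Complex.exp (s * t) = - Complex.exp (s * a) / s := by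
  have hs0 : s ≠ 0 := fun h => by simp [h] at hs
  have key := integral_Ioi_of_hasDerivAt_of_tendsto' (a := a)
    (f := fun t : ℝ => Complex.exp (s * t) / s) (f' := fun t : ℝ => Complex.exp (s * t))
    (m := 0) ?_ ?_ ?_
  · rw [key]; ring
  · intro x hx
    have h1 : HasDerivAt (fun z : ℂ => Complex.exp (s * z) / s) (Complex.exp (s * x)) (x:ℝ) := by
      have := (((hasDerivAt_id ((x:ℝ):ℂ)).const_mul s).cexp).div_const s
      simp only [mul_one] at this
      rw [mul_div_cancel_right₀ _ hs0] at this
      exact this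
    exact h1.comp_ofReal
  · exact aux_integrableOn_cexp s hs a
  · rw [tendsto_zero_iff_norm_tendsto_zero]
    have hn : ∀ t : ℝ, ‖Complex.exp (s * t) / s‖ = Real.exp (s.re * t) / ‖s‖ := by
      intro t
      rw [norm_div, Complex.norm_exp]
      congr 2
      simp [Complex.mul_re]
    simp only [hn]
    rw [show (0:ℝ) = 0 / ‖s‖ by simp]
    apply Tendsto.div_const
    have : Tendsto (fun t : ℝ => Real.exp (-(-s.re * t))) atTop (nhds 0) := by
      apply Real.tendsto_exp_neg_atTop_nhds_zero.comp
      exact Tendsto.const_mul_atTop (neg_pos.mpr hs) tendsto_id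
    simpa using this

theorem aux_integral_exp_real (l : ℝ) (hl : 0 < l) (a : ℝ) :
    ∫ t in Ioi a, Real.exp (-l * t) = Real.exp (-l * a) / l := by
  have := MeasureTheory.integral_comp_mul_left_Ioi (fun x => Real.exp (-x)) a hl
  simp only [smul_eq_mul, integral_exp_neg_Ioi] at this
  rw [show (fun t => Real.exp (-l*t)) = (fun t => Real.exp (-(l*t))) by ext t; ring_nf]
  rw [this, neg_mul]
  ring

theorem aux_tsum_indicator (s : ℂ) (t : ℝ) (ht : 0 ≤ t) :
    ∑' n : ℕ, (Ici ((n:ℝ))).indicator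
        (fun u : ℝ => ((Λ n : ℝ) : ℂ) * Complex.exp (s * u)) t
      = ((chebyshevPsi t : ℝ) : ℂ) * Complex.exp (s * t) := by
  rw [tsum_eq_sum (s := Finset.Icc 1 ⌊t⌋₊) ?_]
  · rw [chebyshevPsi]
    push_cast
    rw [Finset.sum_mul]
    refine Finset.sum_congr rfl fun n hn => ?_
    rw [Set.indicator_of_mem]
    exact mem_Ici.mpr ((Nat.le_floor_iff ht).mp (Finset.mem_Icc.mp hn).2)
  · intro n hn
    rw [Finset.mem_Icc, not_and_or] at hn
    rcases hn with hn | hn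
    · interval_cases n
      simp [Set.indicator_apply]
    · push_neg at hn
      rw [Set.indicator_of_notMem]
      exact fun h => absurd (Nat.le_floor (mem_Ici.mp h)) (Nat.not_le.mpr hn)

theorem aux_term_integral (s : ℂ) (hs : s.re < 0) (n : ℕ) :
    ∫ t in Ioi (1:ℝ),
        (Ici ((n:ℝ))).indicator (fun u : ℝ => ((Λ n : ℝ):ℂ) * Complex.exp (s * u)) t
      = -(((Λ n : ℝ):ℂ) * Complex.exp (s * n)) / s := by
  rcases lt_or_ge n 2 with hn | hn
  · interval_cases n <;>
      simp [ArithmeticFunction.vonMangoldt_apply_one, Set.indicator_apply]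
  · have h1 : (1:ℝ) < (n:ℝ) := by exact_mod_cast hn
    have hsub : Ici ((n:ℝ)) ⊆ Ioi 1 := fun x hx => lt_of_lt_of_le h1 hx
    rw [integral_indicator measurableSet_Ici, Measure.restrict_restrict measurableSet_Ici,
        inter_eq_left.mpr hsub, integral_Ici_eq_integral_Ioi, integral_const_mul,
        aux_integral_cexp s hs n]
    push_cast
    ring

theorem aux_term_norm_integral (l : ℝ) (hl : 0 < l) (s : ℂ) (hre : s.re = -l) (n : ℕ) :
    ∫ t in Ioi (1:ℝ),
        ‖(Ici ((n:ℝ))).indicator (fun u : ℝ => ((Λ n : ℝ):ℂ) * Complex.exp (s * u)) t‖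
      ≤ (Λ n : ℝ) * Real.exp (-l * n) / l := by
  have hnorm : ∀ u : ℝ, ‖((Λ n : ℝ):ℂ) * Complex.exp (s * u)‖
      = (Λ n : ℝ) * Real.exp (-l * u) := by
    intro u
    rw [norm_mul, Complex.norm_real, Real.norm_of_nonneg ArithmeticFunction.vonMangoldt_nonneg,
        Complex.norm_exp]
    congr 2
    simp [Complex.mul_re, hre]
  have hg : IntegrableOn (fun u : ℝ => (Λ n : ℝ) * Real.exp (-l * u)) (Ici (n:ℝ)) := by
    rw [integrableOn_Ici_iff_integrableOn_Ioi]
    exact (exp_neg_integrableOn_Ioi _ hl).const_mul _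
  calc ∫ t in Ioi (1:ℝ),
        ‖(Ici ((n:ℝ))).indicator (fun u : ℝ => ((Λ n : ℝ):ℂ) * Complex.exp (s * u)) t‖
      = ∫ t in Ioi (1:ℝ),
          (Ici ((n:ℝ))).indicator (fun u : ℝ => (Λ n : ℝ) * Real.exp (-l * u)) t := by
        refine setIntegral_congr_fun measurableSet_Ioi fun t _ => ?_
        rw [norm_indicator_eq_indicator_norm, Set.indicator_congr fun u _ => hnorm u]
    _ = ∫ t in Ici ((n:ℝ)) ∩ Ioi 1, (Λ n : ℝ) * Real.exp (-l * t) := by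
        rw [integral_indicator measurableSet_Ici, Measure.restrict_restrict measurableSet_Ici]
    _ ≤ ∫ t in Ici ((n:ℝ)), (Λ n : ℝ) * Real.exp (-l * t) := by
        refine setIntegral_mono_set hg ?_ (HasSubset.Subset.eventuallyLE inter_subset_left)
        filter_upwards with t
        simp only [Pi.zero_apply]
        exact mul_nonneg ArithmeticFunction.vonMangoldt_nonneg (Real.exp_pos _).le
    _ = (Λ n : ℝ) * Real.exp (-l * n) / l := by
        rw [integral_Ici_eq_integral_Ioi, integral_const_mul, aux_integral_exp_real l hl]
        ring

set_option maxHeartbeats 1000000 in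
theorem aux_sum_eq (l : ℝ) (hl : 0 < l) (s : ℂ) (hre : s.re = -l) :
    ∑' n : ℕ, ((Λ n : ℝ):ℂ) * Complex.exp (s * n)
      = -s * ∫ t in Ioi (1:ℝ), ((chebyshevPsi t : ℝ):ℂ) * Complex.exp (s * t) := by
  have hs : s.re < 0 := by rw [hre]; linarith
  have hs0 : s ≠ 0 := fun h => by rw [h] at hs; simp at hs
  set F : ℕ → ℝ → ℂ := fun n => (Ici ((n:ℝ))).indicator
    (fun u : ℝ => ((Λ n : ℝ):ℂ) * Complex.exp (s * u)) with hF
  have hint : ∀ n, Integrable (F n) (volume.restrict (Ioi (1:ℝ))) := fun n =>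
    ((aux_integrableOn_cexp s hs 1).const_mul _).indicator measurableSet_Ici
  have hsum2 : Summable (fun n : ℕ => (Λ n : ℝ) * Real.exp (-l * n) / l) := by
    have hbig : Summable (fun n : ℕ => ((n:ℝ) ^ 1 * Real.exp (-l * n)) / l) :=
      (Real.summable_pow_mul_exp_neg_nat_mul 1 hl).div_const l
    refine Summable.of_nonneg_of_le (fun n => ?_) (fun n => ?_) hbig
    · have h0 := ArithmeticFunction.vonMangoldt_nonneg (n := n)
      positivity
    · have hle : Λ n ≤ (n:ℝ) :=
        (ArithmeticFunction.vonMangoldt_le_log).trans (Real.log_le_self (Nat.cast_nonneg n))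
      rw [pow_one]
      gcongr
  have hsum : Summable fun n : ℕ => ∫ t in Ioi (1:ℝ), ‖F n t‖ := by
    refine Summable.of_nonneg_of_le (fun n => ?_) (fun n => ?_) hsum2
    · exact integral_nonneg fun t => norm_nonneg _
    · exact aux_term_norm_integral l hl s hre n
  have hswap := MeasureTheory.integral_tsum_of_summable_integral_norm hint hsum
  have hL : ∑' n : ℕ, ∫ t in Ioi (1:ℝ), F n t
      = (-1/s) * ∑' n : ℕ, (((Λ n:ℝ):ℂ) * Complex.exp (s * n)) := by
    rw [← tsum_mul_left]
    refine tsum_congr fun n => ?_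
    rw [hF, aux_term_integral s hs n]
    ring
  have hR : ∫ t in Ioi (1:ℝ), (∑' n, F n t)
      = ∫ t in Ioi (1:ℝ), ((chebyshevPsi t:ℝ):ℂ) * Complex.exp (s * t) :=
    setIntegral_congr_fun measurableSet_Ioi fun t ht =>
      aux_tsum_indicator s t (by have := mem_Ioi.mp ht; linarith)
  rw [hL, hR] at hswap
  field_simp at hswap
  linear_combination -hswap

/-- If `|ψ(x) - x| ≤ C x^{1/2}` for `x ≥ 1`, then for every `λ > 0` the Stieltjes integral
`I = ∑ Λ(n)(-1)^n e^{-λn}` equals the main term `-(iπ-λ)∫_1^∞ t e^{(iπ-λ)t} dt` up to an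
error of modulus at most `C √(π² + λ²) Γ(3/2)/λ^{3/2}`. -/
theorem stieltjes_integral_main_term_estimate (C : ℝ) (hC : 0 ≤ C)
    (hpsi : ∀ x : ℝ, 1 ≤ x → |chebyshevPsi x - x| ≤ C * x ^ ((1 : ℝ) / 2))
    (l : ℝ) (hl : 0 < l) :
    ‖(∑' n : ℕ, (ArithmeticFunction.vonMangoldt n : ℂ) * (-1) ^ n *
        Complex.exp (-(l : ℂ) * n)) +
      ((Real.pi : ℂ) * Complex.I - l) *
        ∫ t : ℝ in Set.Ioi (1 : ℝ),
          (t : ℂ) * Complex.exp (((Real.pi : ℂ) * Complex.I - l) * t)‖ ≤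
      C * Real.sqrt (Real.pi ^ 2 + l ^ 2) * Real.Gamma (3 / 2) / l ^ ((3 : ℝ) / 2) := by
  set s : ℂ := (Real.pi:ℂ) * Complex.I - (l:ℂ) with hsdef
  have hre : s.re = -l := by simp [hsdef]
  have hs : s.re < 0 := by rw [hre]; linarith
  have hexpnorm : ∀ t : ℝ, ‖Complex.exp (s * t)‖ = Real.exp (-l * t) := by
    intro t
    rw [Complex.norm_exp]
    congr 1
    rw [show (s * t).re = s.re * t by simp [Complex.mul_re], hre]
  have hmeas : Measurable chebyshevPsi :=
    Measurable.comp (f := Nat.floor)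
      (g := fun n : ℕ => ∑ k ∈ Finset.Icc 1 n, Λ k) measurable_from_top Nat.measurable_floor
  -- rewrite the tsum
  have htsum : (∑' n : ℕ, (Λ n : ℂ) * (-1)^n * Complex.exp (-(l:ℂ) * n))
      = ∑' n : ℕ, ((Λ n : ℝ):ℂ) * Complex.exp (s * n) := by
    refine tsum_congr fun n => ?_
    have h : Complex.exp (s * n) = (-1)^n * Complex.exp (-(l:ℂ) * n) := by
      rw [show s * (n:ℂ) = (n:ℂ) * ((Real.pi:ℂ) * Complex.I) + (-(l:ℂ) * n) by
        rw [hsdef]; ring]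
      rw [Complex.exp_add, Complex.exp_nat_mul, Complex.exp_pi_mul_I]
    rw [h]
    ring
  -- integrability facts
  have hexpint : ∀ a : ℝ, -1 < a →
      IntegrableOn (fun t : ℝ => t ^ a * Real.exp (-l * t)) (Ioi 0) := by
    intro a ha
    have h := integrableOn_rpow_mul_exp_neg_mul_rpow (p := 1) ha zero_lt_one hl
    exact h.congr_fun (fun x hx => by simp only [Real.rpow_one]) measurableSet_Ioi
  have htexp : IntegrableOn (fun t : ℝ => t * Real.exp (-l * t)) (Ioi 1) := by
    have h := ((hexpint 1 (by norm_num)).mono_set (Ioi_subset_Ioi zero_le_one))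
    exact h.congr_fun (fun x hx => by simp only [Real.rpow_one]) measurableSet_Ioi
  have hψb : ∀ t : ℝ, 1 ≤ t → |chebyshevPsi t| ≤ (1 + C) * t := by
    intro t ht
    have h1 := hpsi t ht
    have h2 : t ^ ((1:ℝ)/2) ≤ t := by
      nth_rewrite 2 [show t = t ^ (1:ℝ) by rw [Real.rpow_one]]
      exact Real.rpow_le_rpow_of_exponent_le ht (by norm_num)
    have h3 : |chebyshevPsi t| ≤ |chebyshevPsi t - t| + |t| := by
      calc |chebyshevPsi t| = |(chebyshevPsi t - t) + t| := by ring_nf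
        _ ≤ |chebyshevPsi t - t| + |t| := abs_add_le _ _
    have h4 : |t| = t := abs_of_nonneg (by linarith)
    nlinarith [Real.rpow_nonneg (show (0:ℝ) ≤ t by linarith) ((1:ℝ)/2)]
  have hIψ : IntegrableOn (fun t : ℝ => ((chebyshevPsi t : ℝ):ℂ) * Complex.exp (s * t))
      (Ioi 1) := by
    refine (htexp.const_mul (1 + C)).mono' ?_ ?_
    · exact ((Complex.measurable_ofReal.comp hmeas).mul
        (Complex.continuous_exp.comp
          (continuous_const.mul Complex.continuous_ofReal)).measurable).aestronglyMeasurable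
    · filter_upwards [ae_restrict_mem measurableSet_Ioi] with t ht
      have ht1 : (1:ℝ) ≤ t := (mem_Ioi.mp ht).le
      rw [norm_mul, Complex.norm_real, hexpnorm t, Real.norm_eq_abs]
      calc |chebyshevPsi t| * Real.exp (-l * t)
          ≤ ((1 + C) * t) * Real.exp (-l * t) :=
            mul_le_mul_of_nonneg_right (hψb t ht1) (Real.exp_nonneg _)
        _ = (1 + C) * (t * Real.exp (-l * t)) := by ring
  have hIt : IntegrableOn (fun t : ℝ => (t:ℂ) * Complex.exp (s * t)) (Ioi 1) := by
    refine htexp.mono' ?_ ?_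
    · exact (Complex.measurable_ofReal.mul
        (Complex.continuous_exp.comp
          (continuous_const.mul Complex.continuous_ofReal)).measurable).aestronglyMeasurable
    · filter_upwards [ae_restrict_mem measurableSet_Ioi] with t ht
      rw [norm_mul, Complex.norm_real, hexpnorm t, Real.norm_eq_abs,
        abs_of_nonneg (by linarith [mem_Ioi.mp ht] : (0:ℝ) ≤ t)]
  rw [htsum, aux_sum_eq l hl s hre]
  have hcomb : -s * (∫ t in Ioi (1:ℝ), ((chebyshevPsi t : ℝ):ℂ) * Complex.exp (s * t))
        + s * ∫ t in Ioi (1:ℝ), (t:ℂ) * Complex.exp (s * t)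
      = s * ∫ t in Ioi (1:ℝ), ((t:ℂ) - (chebyshevPsi t : ℝ)) * Complex.exp (s * t) := by
    simp_rw [sub_mul]
    rw [integral_sub hIt hIψ]
    ring
  rw [hcomb, norm_mul]
  -- bound the norm of the integral
  have hb1 : ‖∫ t in Ioi (1:ℝ), ((t:ℂ) - (chebyshevPsi t : ℝ)) * Complex.exp (s * t)‖
      ≤ ∫ t in Ioi (1:ℝ), C * (t ^ ((1:ℝ)/2) * Real.exp (-l * t)) := by
    have hdiff : IntegrableOn
        (fun t : ℝ => ((t:ℂ) - (chebyshevPsi t : ℝ)) * Complex.exp (s * t)) (Ioi 1) := by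
      simp_rw [sub_mul]
      exact hIt.sub hIψ
    refine (norm_integral_le_integral_norm _).trans ?_
    refine setIntegral_mono_on hdiff.norm
      (((hexpint (1/2) (by norm_num)).mono_set
        (Ioi_subset_Ioi zero_le_one)).const_mul C) measurableSet_Ioi ?_
    intro t ht
    have ht1 : (1:ℝ) ≤ t := (mem_Ioi.mp ht).le
    rw [norm_mul, hexpnorm t, show (t:ℂ) - ((chebyshevPsi t : ℝ):ℂ)
        = ((t - chebyshevPsi t : ℝ):ℂ) by push_cast; ring, Complex.norm_real,
      Real.norm_eq_abs, abs_sub_comm]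
    calc |chebyshevPsi t - t| * Real.exp (-l * t)
        ≤ (C * t ^ ((1:ℝ)/2)) * Real.exp (-l * t) :=
          mul_le_mul_of_nonneg_right (hpsi t ht1) (Real.exp_nonneg _)
      _ = C * (t ^ ((1:ℝ)/2) * Real.exp (-l * t)) := by ring
  have hb2 : ∫ t in Ioi (1:ℝ), C * (t ^ ((1:ℝ)/2) * Real.exp (-l * t))
      ≤ ∫ t in Ioi (0:ℝ), C * (t ^ ((1:ℝ)/2) * Real.exp (-l * t)) := by
    refine setIntegral_mono_set ((hexpint (1/2) (by norm_num)).const_mul C) ?_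
      (HasSubset.Subset.eventuallyLE (Ioi_subset_Ioi zero_le_one))
    filter_upwards [ae_restrict_mem measurableSet_Ioi] with t ht
    simp only [Pi.zero_apply]
    have h0 : (0:ℝ) < t := mem_Ioi.mp ht
    positivity
  have hb3 : ∫ t in Ioi (0:ℝ), C * (t ^ ((1:ℝ)/2) * Real.exp (-l * t))
      = C * ((1/l) ^ ((3:ℝ)/2) * Real.Gamma (3/2)) := by
    rw [integral_const_mul]
    congr 1
    have h := Real.integral_rpow_mul_exp_neg_mul_Ioi
      (a := 3/2) (r := l) (by norm_num) hl
    rw [← h]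
    refine setIntegral_congr_fun measurableSet_Ioi fun t ht => ?_
    norm_num
  have hsnorm : ‖s‖ = Real.sqrt (Real.pi ^ 2 + l ^ 2) := by
    rw [Complex.norm_def, Complex.normSq_apply]
    have h1 : s.re = -l := hre
    have h2 : s.im = Real.pi := by simp [hsdef]
    rw [h1, h2]
    congr 1
    ring
  have hfin : ‖s‖ * (C * ((1/l) ^ ((3:ℝ)/2) * Real.Gamma (3/2)))
      = C * Real.sqrt (Real.pi ^ 2 + l ^ 2) * Real.Gamma (3/2) / l ^ ((3:ℝ)/2) := by
    rw [hsnorm, Real.div_rpow zero_le_one hl.le, Real.one_rpow]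
    field_simp
  calc ‖s‖ * ‖∫ t in Ioi (1:ℝ), ((t:ℂ) - (chebyshevPsi t : ℝ)) * Complex.exp (s * t)‖
      ≤ ‖s‖ * (C * ((1/l) ^ ((3:ℝ)/2) * Real.Gamma (3/2))) := by
        rw [← hb3]
        exact mul_le_mul_of_nonneg_left (hb1.trans hb2) (norm_nonneg _)
    _ = C * Real.sqrt (Real.pi ^ 2 + l ^ 2) * Real.Gamma (3/2) / l ^ ((3:ℝ)/2) := hfin
end
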